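/- In the simplicial setup, set M₁ := ∪_{b∈B_A} m_b·M_T. Then M_S \ M₁ = ∪_{n∈N₁} M_{nS}; that is, a monomial of S fails to be of the form m_b·(monomial in the y-variables) with b ∈ B_A if and only if it is divisible by some element of N₁. -/

import Mathlib

namespace SimplicialToric

/-- `eVec d α i` is `α` times the `i`-th standard basis vector of `ℕ^d`. -/
def eVec (d α : ℕ) (i : Fin d) : Fin d → ℕ := fun j => if j = i then α else 0

/-- The Hilbert basis of a submonoid `B ⊆ ℕ^d`: the set of irreducible elements
(in `ℕ^d` the only unit is `0`). -/
def Hilb {d : ℕ} (B : AddSubmonoid (Fin d → ℕ)) : Set (Fin d → ℕ) :=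
  {b | b ∈ B ∧ b ≠ 0 ∧ ∀ x ∈ B, ∀ y ∈ B, b = x + y → x = 0 ∨ y = 0}

/-- The submonoid `A = Σᵢ ℤ≥0·eᵢ = αℤ≥0^d`. -/
def Amon (d α : ℕ) : AddSubmonoid (Fin d → ℕ) :=
  AddSubmonoid.closure (Set.range (eVec d α))

/-- `B_A = {x ∈ B : x − a ∉ B for every a ∈ A \ {0}}`. -/
def BA {d : ℕ} (B : AddSubmonoid (Fin d → ℕ)) (α : ℕ) : Set (Fin d → ℕ) :=
  {x | x ∈ B ∧ ∀ z ∈ Amon d α, z ≠ 0 → ∀ y ∈ B, x ≠ y + z}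

/-- The generators `a₁,…,a_c,e₁,…,e_d` of `B`, indexed by the variables of
`S = K[x₁,…,x_c,y₁,…,y_d]`; variable `Fin.castAdd d i` is `xᵢ`, variable
`Fin.natAdd c j` is `yⱼ`. -/
def gens (c d α : ℕ) (a : Fin c → Fin d → ℕ) : Fin (c + d) → Fin d → ℕ :=
  Fin.addCases a (eVec d α)

/-- The element of `B` represented by the monomial with exponent vector `σ`:
`π(x^μ y^ν) = t^(valE σ)`. -/
def valE (c d α : ℕ) (a : Fin c → Fin d → ℕ) (σ : Fin (c + d) →₀ ℕ) : Fin d → ℕ :=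
  ∑ v : Fin (c + d), σ v • gens c d α a v

/-- total degree of a monomial (exponent vector). -/
def degE {N : ℕ} (σ : Fin N →₀ ℕ) : ℕ := ∑ v, σ v

/-- the graded reverse lexicographic order: `grevlex σ τ` means `σ ≺ τ`,
i.e. `deg σ < deg τ`, or degrees agree and the last nonzero entry of `τ − σ`
is negative. -/
def grevlex {N : ℕ} (σ τ : Fin N →₀ ℕ) : Prop :=
  degE σ < degE τ ∨ (degE σ = degE τ ∧ ∃ k, τ k < σ k ∧ ∀ l, k < l → σ l = τ l)

/-- `x ∼ y` iff `x − y ∈ gp(A) = αℤ^d`. -/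
def Rel {d : ℕ} (α : ℕ) (x y : Fin d → ℕ) : Prop :=
  ∀ j, (α : ℤ) ∣ (x j : ℤ) - (y j : ℤ)

/-- `Γ` is an equivalence class of `B_A` modulo `αℤ^d`. -/
def IsClass {d : ℕ} (B : AddSubmonoid (Fin d → ℕ)) (α : ℕ) (Γ : Set (Fin d → ℕ)) : Prop :=
  ∃ x ∈ BA B α, Γ = {y | y ∈ BA B α ∧ Rel α x y}

/-- the total order on an equivalence class of `B_A`: `b ≺ c` iff the last
nonzero entry of `b − c` is negative. -/
def ltCls {d : ℕ} (x y : Fin d → ℕ) : Prop :=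
  ∃ k, x k < y k ∧ ∀ l, k < l → x l = y l

/-- `joinSub x y = x∨y − y`, where `x∨y` is the componentwise maximum. -/
def joinSub {d : ℕ} (x y : Fin d → ℕ) : Fin d → ℕ := fun j => max (x j) (y j) - y j

/-- the monomial with exponents `σ` lies in `T = K[y₁,…,y_d]`. -/
def yOnly (c d : ℕ) (σ : Fin (c + d) →₀ ℕ) : Prop := ∀ i : Fin c, σ (Fin.castAdd d i) = 0

/-- the monomial with exponents `σ` involves only the `x`-variables. -/
def xOnly (c d : ℕ) (σ : Fin (c + d) →₀ ℕ) : Prop := ∀ j : Fin d, σ (Fin.natAdd c j) = 0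

/-- the set `N₁`, for a given choice `m` of the minimal monomials `m_b`. -/
def N1set (c d α : ℕ) (a : Fin c → Fin d → ℕ) (B : AddSubmonoid (Fin d → ℕ))
    (m : (Fin d → ℕ) → (Fin (c + d) →₀ ℕ)) : Set (Fin (c + d) →₀ ℕ) :=
  {n | ∃ (i : Fin c) (b : Fin d → ℕ), b ∈ BA B α ∧
    n = Finsupp.single (Fin.castAdd d i) 1 + m b ∧ n ≠ m (a i + b)}

/-- the set `N₂ = ∪_Γ N_Γ`, where `N_Γ = {n(bᵢ,bⱼ) = m_{bⱼ}·m_{bᵢ∨bⱼ−bⱼ} : bᵢ ≺ bⱼ in Γ}`. -/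
def N2set {d : ℕ} (c α : ℕ) (B : AddSubmonoid (Fin d → ℕ))
    (m : (Fin d → ℕ) → (Fin (c + d) →₀ ℕ)) : Set (Fin (c + d) →₀ ℕ) :=
  {n | ∃ Γ, IsClass B α Γ ∧ ∃ bi ∈ Γ, ∃ bj ∈ Γ, ltCls bi bj ∧ n = m bj + m (joinSub bi bj)}

/-- `σ` is the exponent vector of the initial (i.e. `≺`-largest) term of `f`. -/
def IsLeadMon {N : ℕ} {K : Type*} [Field K] (f : MvPolynomial (Fin N) K)
    (σ : Fin N →₀ ℕ) : Prop :=
  σ ∈ f.support ∧ ∀ τ ∈ f.support, τ = σ ∨ grevlex τ σ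

/-- the initial ideal of `I` with respect to the graded reverse lexicographic order. -/
noncomputable def initialIdeal {N : ℕ} {K : Type*} [Field K] (I : Ideal (MvPolynomial (Fin N) K)) :
    Ideal (MvPolynomial (Fin N) K) :=
  Ideal.span {g | ∃ f ∈ I, ∃ σ, IsLeadMon f σ ∧ g = MvPolynomial.monomial σ (1 : K)}

end SimplicialToric

/-!
Write `M₁` for the set of monomials `m_b·t` with `b ∈ B_A` and `t` a `y`-monomial.

`M₁` is closed under divisors: a divisor `ν` of `m_b` is again minimal (`m_{π(ν)} = ν`) because
grevlex is compatible with multiplication, and `b = π(ν) + π(m_b / ν)` with `b ∈ B_A` forces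
`π(ν) ∈ B_A`. Moreover `M₁` contains `m_b` for every `b ∈ B`: if `b = y + z` with `0 ≠ z ∈ A`,
then `m_y` times a `y`-monomial of value `z` is a preimage of `b` of the same degree involving a
`y`-variable, so by minimality of `m_b` in grevlex some `y_j` divides `m_b`; divide it out and
induct.

For `b ∈ B_A` no `y_j` divides `m_b` (else `b - e_j ∈ B`), so `x_i·m_b = m_{b'}·t` forces `t = 1`
and then `x_i·m_b = m_{a_i+b}`: elements of `N₁`, hence all their multiples, lie outside `M₁`.
Conversely, build a monomial one variable at a time from `1 = m_0`: multiplying `m_b·t ∈ M₁` by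
`y_j` stays in `M₁`, and multiplying it by `x_i` gives either `m_{a_i+b}·t ∈ M₁` or a multiple of
`x_i·m_b ∈ N₁`.
-/

lemma Finsupp.induction_single_one {ι : Type*} {motive : (ι →₀ ℕ) → Prop} (σ : ι →₀ ℕ)
    (zero : motive 0) (single_one_add : ∀ v σ, motive σ → motive (Finsupp.single v 1 + σ)) :
    motive σ := by
  induction σ using Finsupp.induction with
  | zero => exact zero
  | single_add v n σ _ hn ih =>
    clear hn
    induction n with
    | zero => simpa using ih
    | succ n ihn =>
      rw [Finsupp.single_add, add_comm (Finsupp.single v n), add_assoc]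
      exact single_one_add v _ ihn

namespace SimplicialToric

section Grevlex

variable {N : ℕ}

lemma degE_add (σ τ : Fin N →₀ ℕ) : degE (σ + τ) = degE σ + degE τ := by
  simp [degE, Finset.sum_add_distrib]

lemma grevlex_irrefl (σ : Fin N →₀ ℕ) : ¬ grevlex σ σ := by
  rintro (h | ⟨-, k, hk, -⟩) <;> omega

lemma grevlex_asymm {σ τ : Fin N →₀ ℕ} (h₁ : grevlex σ τ) : ¬ grevlex τ σ := by
  intro h₂
  rcases h₁ with h₁ | ⟨hd₁, k₁, hk₁, ha₁⟩ <;> rcases h₂ with h₂ | ⟨hd₂, k₂, hk₂, ha₂⟩ <;> try omega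
  rcases lt_trichotomy k₁ k₂ with h | rfl | h
  · have := ha₁ k₂ h; omega
  · omega
  · have := ha₂ k₁ h; omega

lemma not_grevlex_zero (σ : Fin N →₀ ℕ) : ¬ grevlex σ 0 := by
  rintro (h | ⟨h, k, hk, -⟩)
  · simp [degE] at h
  · have := Finset.single_le_sum (f := σ) (fun _ _ => Nat.zero_le _) (Finset.mem_univ k)
    simp only [degE, Finsupp.coe_zero, Pi.zero_apply, Finset.sum_const_zero] at h hk ⊢
    omega

lemma grevlex_add_right {σ τ : Fin N →₀ ℕ} (ρ : Fin N →₀ ℕ) (h : grevlex σ τ) :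
    grevlex (σ + ρ) (τ + ρ) := by
  rcases h with h | ⟨hd, k, hk, ha⟩
  · left; simp only [degE_add]; omega
  · refine Or.inr ⟨by simp only [degE_add, hd], k, by simp only [Finsupp.add_apply]; omega,
      fun l hl => by simp only [Finsupp.add_apply, ha l hl]⟩

lemma exists_last_ne {σ τ : Fin N →₀ ℕ} {k : Fin N} (hk : σ k ≠ τ k) :
    ∃ L, k ≤ L ∧ σ L ≠ τ L ∧ ∀ l, L < l → σ l = τ l := by
  set D := Finset.univ.filter fun l => σ l ≠ τ l
  have hkD : k ∈ D := by simpa [D] using hk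
  refine ⟨D.max' ⟨k, hkD⟩, D.le_max' k hkD, by simpa [D] using D.max'_mem ⟨k, hkD⟩,
    fun l hl => ?_⟩
  by_contra hne
  exact (D.le_max' l (by simpa [D] using hne)).not_gt hl

lemma grevlex_of_tail_eq_zero {σ τ : Fin N →₀ ℕ} (hdeg : degE σ = degE τ) {k : Fin N}
    (hτ : ∀ l, k ≤ l → τ l = 0) (hσ : σ k ≠ 0) : grevlex σ τ := by
  obtain ⟨L, hkL, hne, heq⟩ := exists_last_ne (σ := σ) (τ := τ) (by rwa [hτ k le_rfl])
  exact Or.inr ⟨hdeg, L, by have := hτ L hkL; omega, heq⟩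

end Grevlex

section Monomials

variable {c d α : ℕ} {a : Fin c → Fin d → ℕ}

@[simp] lemma gens_castAdd (i : Fin c) : gens c d α a (Fin.castAdd d i) = a i := by
  simp [gens]

@[simp] lemma gens_natAdd (j : Fin d) : gens c d α a (Fin.natAdd c j) = eVec d α j := by
  simp [gens]

lemma valE_zero : valE c d α a 0 = 0 := by
  simp [valE]

lemma valE_add (σ τ : Fin (c + d) →₀ ℕ) :
    valE c d α a (σ + τ) = valE c d α a σ + valE c d α a τ := by
  simp [valE, add_smul, Finset.sum_add_distrib]

lemma valE_single (v : Fin (c + d)) : valE c d α a (Finsupp.single v 1) = gens c d α a v := by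
  simp [valE, Finsupp.single_apply]

lemma valE_eq_valE_tsub_single_add {σ : Fin (c + d) →₀ ℕ} {v : Fin (c + d)} (hv : σ v ≠ 0) :
    valE c d α a σ = valE c d α a (σ - Finsupp.single v 1) + gens c d α a v := by
  have hle : Finsupp.single v 1 ≤ σ := Finsupp.single_le_iff.mpr (Nat.one_le_iff_ne_zero.mpr hv)
  conv_lhs => rw [← tsub_add_cancel_of_le hle]
  rw [valE_add, valE_single]

lemma valE_mem {B : AddSubmonoid (Fin d → ℕ)} (hgens : ∀ v, gens c d α a v ∈ B)
    (σ : Fin (c + d) →₀ ℕ) : valE c d α a σ ∈ B :=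
  B.sum_mem fun v _ => B.nsmul_mem (hgens v) _

lemma sum_valE (hdeg : ∀ i, ∑ j, a i j = α) (σ : Fin (c + d) →₀ ℕ) :
    ∑ j, valE c d α a σ j = α * degE σ := by
  have hsum : ∀ v, ∑ j, gens c d α a v j = α := by
    intro v
    cases v using Fin.addCases with
    | left i => simpa using hdeg i
    | right j => simp [eVec]
  simp only [valE, degE, Finset.sum_apply, Pi.smul_apply, smul_eq_mul]
  rw [Finset.sum_comm]
  simp only [← Finset.sum_mul, hsum, Finset.mul_sum, mul_comm]

lemma degE_eq_of_valE_eq (hα : 0 < α) (hdeg : ∀ i, ∑ j, a i j = α) {σ τ : Fin (c + d) →₀ ℕ}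
    (h : valE c d α a σ = valE c d α a τ) : degE σ = degE τ :=
  Nat.eq_of_mul_eq_mul_left hα (by rw [← sum_valE hdeg, ← sum_valE hdeg, h])

lemma yOnly_zero : yOnly c d 0 := fun _ => rfl

lemma yOnly_add {σ τ : Fin (c + d) →₀ ℕ} (hσ : yOnly c d σ) (hτ : yOnly c d τ) :
    yOnly c d (σ + τ) := fun i => by simp [hσ i, hτ i]

lemma yOnly_single (j : Fin d) : yOnly c d (Finsupp.single (Fin.natAdd c j) 1) := fun i => by
  simp [Finsupp.single_apply, Fin.ext_iff]
  omega

lemma yOnly_of_le {σ τ : Fin (c + d) →₀ ℕ} (hle : σ ≤ τ) (hτ : yOnly c d τ) : yOnly c d σ :=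
  fun i => Nat.eq_zero_of_le_zero (hτ i ▸ hle _)

lemma xOnly_add {σ τ : Fin (c + d) →₀ ℕ} (hσ : xOnly c d σ) (hτ : xOnly c d τ) :
    xOnly c d (σ + τ) := fun j => by simp [hσ j, hτ j]

lemma xOnly_single (i : Fin c) : xOnly c d (Finsupp.single (Fin.castAdd d i) 1) := fun j => by
  simp [Finsupp.single_apply, Fin.ext_iff]
  omega

lemma eq_zero_of_yOnly_of_le_xOnly {σ τ : Fin (c + d) →₀ ℕ} (hτ : yOnly c d τ)
    (hσ : xOnly c d σ) (hle : τ ≤ σ) : τ = 0 := by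
  ext v
  cases v using Fin.addCases with
  | left i => exact hτ i
  | right j => simpa [hσ j] using hle (Fin.natAdd c j)

lemma exists_yOnly_valE_eq {z : Fin d → ℕ} (hz : z ∈ Amon d α) :
    ∃ ζ, yOnly c d ζ ∧ valE c d α a ζ = z := by
  induction hz using AddSubmonoid.closure_induction with
  | mem x hx =>
    obtain ⟨j, rfl⟩ := hx
    exact ⟨_, yOnly_single j, by rw [valE_single, gens_natAdd]⟩
  | zero => exact ⟨0, yOnly_zero, valE_zero⟩
  | add x y _ _ ihx ihy =>
    obtain ⟨ζ, hζ, rfl⟩ := ihx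
    obtain ⟨ξ, hξ, rfl⟩ := ihy
    exact ⟨ζ + ξ, yOnly_add hζ hξ, valE_add ζ ξ⟩

end Monomials

section BA

variable {d α : ℕ} {B : AddSubmonoid (Fin d → ℕ)}

lemma zero_mem_BA : (0 : Fin d → ℕ) ∈ BA B α := by
  refine ⟨B.zero_mem, fun z _ hz y _ hyz => hz ?_⟩
  funext j
  have := congrFun hyz j
  simp only [Pi.zero_apply, Pi.add_apply] at this ⊢
  omega

lemma mem_BA_of_add_mem_BA {g b : Fin d → ℕ} (hgb : g + b ∈ BA B α) (hg : g ∈ B) (hb : b ∈ B) :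
    b ∈ BA B α :=
  ⟨hb, fun z hz hz0 y hy hyz =>
    hgb.2 z hz hz0 (g + y) (B.add_mem hg hy) (by rw [hyz, add_assoc])⟩

lemma eVec_mem_Amon (j : Fin d) : eVec d α j ∈ Amon d α :=
  AddSubmonoid.subset_closure ⟨j, rfl⟩

lemma eVec_ne_zero (hα : 0 < α) (j : Fin d) : eVec d α j ≠ 0 := fun h => by
  simpa [eVec, hα.ne'] using congrFun h j

end BA

/-- `m b` is `m_b = min_≺ π⁻¹(t^b)` for every `b ∈ B`. -/
structure IsMinMonomial (c d α : ℕ) (a : Fin c → Fin d → ℕ) (B : AddSubmonoid (Fin d → ℕ))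
    (m : (Fin d → ℕ) → (Fin (c + d) →₀ ℕ)) : Prop where
  valE_eq : ∀ b ∈ B, valE c d α a (m b) = b
  minimal : ∀ b ∈ B, ∀ σ, valE c d α a σ = b → m b = σ ∨ grevlex (m b) σ

def M1set (c d α : ℕ) (B : AddSubmonoid (Fin d → ℕ))
    (m : (Fin d → ℕ) → (Fin (c + d) →₀ ℕ)) : Set (Fin (c + d) →₀ ℕ) :=
  {σ | ∃ b ∈ BA B α, ∃ τ, yOnly c d τ ∧ σ = m b + τ}

section M1

variable {c d α : ℕ} {B : AddSubmonoid (Fin d → ℕ)} {m : (Fin d → ℕ) → (Fin (c + d) →₀ ℕ)}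

lemma m_mem_M1set_of_mem_BA {b : Fin d → ℕ} (hb : b ∈ BA B α) : m b ∈ M1set c d α B m :=
  ⟨b, hb, 0, yOnly_zero, (add_zero _).symm⟩

lemma add_mem_M1set {σ τ : Fin (c + d) →₀ ℕ} (hσ : σ ∈ M1set c d α B m) (hτ : yOnly c d τ) :
    σ + τ ∈ M1set c d α B m := by
  obtain ⟨b, hb, ρ, hρ, rfl⟩ := hσ
  exact ⟨b, hb, ρ + τ, yOnly_add hρ hτ, add_assoc _ _ _⟩

end M1

namespace IsMinMonomial

variable {c d α : ℕ} {a : Fin c → Fin d → ℕ} {B : AddSubmonoid (Fin d → ℕ)}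
  {m : (Fin d → ℕ) → (Fin (c + d) →₀ ℕ)}

lemma not_grevlex (hm : IsMinMonomial c d α a B m) {b : Fin d → ℕ} (hb : b ∈ B)
    {σ : Fin (c + d) →₀ ℕ} (hσ : valE c d α a σ = b) : ¬ grevlex σ (m b) := by
  rcases hm.minimal b hb σ hσ with h | h
  · exact h ▸ grevlex_irrefl _
  · exact grevlex_asymm h

lemma m_zero (hm : IsMinMonomial c d α a B m) : m 0 = 0 :=
  (hm.minimal 0 B.zero_mem 0 valE_zero).resolve_right (not_grevlex_zero _)

lemma m_valE_of_le (hm : IsMinMonomial c d α a B m) (hgens : ∀ v, gens c d α a v ∈ B)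
    {b : Fin d → ℕ} (hb : b ∈ B) {ν : Fin (c + d) →₀ ℕ} (hν : ν ≤ m b) :
    m (valE c d α a ν) = ν := by
  obtain ⟨ρ, hρ⟩ := le_iff_exists_add.mp hν
  have hνB := valE_mem hgens ν
  refine (hm.minimal _ hνB ν rfl).resolve_right fun hlt => hm.not_grevlex hb ?_
    (hρ ▸ grevlex_add_right ρ hlt)
  rw [valE_add, hm.valE_eq _ hνB, ← valE_add, ← hρ, hm.valE_eq b hb]

lemma xOnly_of_mem_BA (hm : IsMinMonomial c d α a B m) (hα : 0 < α)
    (hgens : ∀ v, gens c d α a v ∈ B) {b : Fin d → ℕ} (hb : b ∈ BA B α) : xOnly c d (m b) := by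
  intro j
  by_contra hj
  refine hb.2 _ (eVec_mem_Amon j) (eVec_ne_zero hα j) _
    (valE_mem hgens (m b - Finsupp.single (Fin.natAdd c j) 1)) ?_
  rw [← gens_natAdd (c := c) (a := a), ← valE_eq_valE_tsub_single_add hj, hm.valE_eq b hb.1]

lemma not_xOnly_of_not_mem_BA (hm : IsMinMonomial c d α a B m) (hα : 0 < α)
    (hdeg : ∀ i, ∑ j, a i j = α) {b : Fin d → ℕ} (hb : b ∈ B) (hbA : b ∉ BA B α) :
    ¬ xOnly c d (m b) := by
  intro hx
  obtain ⟨z, hz, hz0, y, hy, rfl⟩ : ∃ z ∈ Amon d α, z ≠ 0 ∧ ∃ y ∈ B, b = y + z := by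
    by_contra! h
    exact hbA ⟨hb, h⟩
  obtain ⟨ζ, hζ, rfl⟩ := exists_yOnly_valE_eq (a := a) hz
  obtain ⟨j, hj⟩ : ∃ j, ζ (Fin.natAdd c j) ≠ 0 := by
    by_contra! h
    exact hz0 (by rw [eq_zero_of_yOnly_of_le_xOnly hζ (σ := ζ) h le_rfl, valE_zero])
  have hval : valE c d α a (m y + ζ) = y + valE c d α a ζ := by rw [valE_add, hm.valE_eq y hy]
  refine hm.not_grevlex hb hval (grevlex_of_tail_eq_zero
    (degE_eq_of_valE_eq hα hdeg (by rw [hval, hm.valE_eq _ hb])) (k := Fin.natAdd c j) ?_ ?_)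
  · intro l hl
    cases l using Fin.addCases with
    | left i => exact absurd hl (by simp [Fin.le_def]; omega)
    | right j' => exact hx j'
  · simp [hj]

lemma m_mem_M1set (hm : IsMinMonomial c d α a B m) (hα : 0 < α) (hdeg : ∀ i, ∑ j, a i j = α)
    (hgens : ∀ v, gens c d α a v ∈ B) {b : Fin d → ℕ} (hb : b ∈ B) :
    m b ∈ M1set c d α B m := by
  induction hn : degE (m b) using Nat.strong_induction_on generalizing b with
  | _ n ih =>
  by_cases hbA : b ∈ BA B α
  · exact m_mem_M1set_of_mem_BA hbA
  obtain ⟨j, hj⟩ : ∃ j, m b (Fin.natAdd c j) ≠ 0 := by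
    simpa [xOnly] using hm.not_xOnly_of_not_mem_BA hα hdeg hb hbA
  set ν := m b - Finsupp.single (Fin.natAdd c j) 1
  have hsplit : m b = ν + Finsupp.single (Fin.natAdd c j) 1 :=
    (tsub_add_cancel_of_le (Finsupp.single_le_iff.mpr (Nat.one_le_iff_ne_zero.mpr hj))).symm
  have hν : m (valE c d α a ν) = ν := hm.m_valE_of_le hgens hb tsub_le_self
  have hlt : degE ν < n := by
    rw [← hn, hsplit, degE_add]
    simp [degE]
  have hνM : ν ∈ M1set c d α B m := hν ▸ ih _ (by rwa [hν]) (valE_mem hgens ν) rfl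
  rw [hsplit]
  exact add_mem_M1set hνM (yOnly_single j)

lemma isLowerSet_M1set (hm : IsMinMonomial c d α a B m) (hgens : ∀ v, gens c d α a v ∈ B) :
    IsLowerSet (M1set c d α B m) := by
  rintro _ ν hle ⟨b, hb, τ, hτ, rfl⟩
  set ν₁ := ν ⊓ m b
  have hν₂ : ν - ν₁ ≤ τ := fun v => by
    have := hle v
    simp only [Finsupp.tsub_apply, Finsupp.inf_apply, Finsupp.add_apply, ν₁] at this ⊢
    omega
  have hν₁ : m (valE c d α a ν₁) = ν₁ := hm.m_valE_of_le hgens hb.1 inf_le_right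
  have hν₁A : valE c d α a ν₁ ∈ BA B α := by
    refine mem_BA_of_add_mem_BA (g := valE c d α a (m b - ν₁)) ?_ (valE_mem hgens _)
      (valE_mem hgens _)
    rw [← valE_add, tsub_add_cancel_of_le inf_le_right, hm.valE_eq b hb.1]
    exact hb
  exact ⟨_, hν₁A, ν - ν₁, yOnly_of_le hν₂ hτ, by rw [hν₁, add_tsub_cancel_of_le inf_le_left]⟩

lemma not_mem_M1set_of_mem_N1set (hm : IsMinMonomial c d α a B m) (hα : 0 < α)
    (hgens : ∀ v, gens c d α a v ∈ B) {n : Fin (c + d) →₀ ℕ} (hn : n ∈ N1set c d α a B m) :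
    n ∉ M1set c d α B m := by
  rintro ⟨b', hb', τ, hτ, heq⟩
  obtain ⟨i, b, hb, rfl, hne⟩ := hn
  have hx := xOnly_add (xOnly_single i) (hm.xOnly_of_mem_BA hα hgens hb)
  rw [eq_zero_of_yOnly_of_le_xOnly hτ hx (heq ▸ le_add_self), add_zero] at heq
  have hab : a i + b = b' := by
    rw [← hm.valE_eq b' hb'.1, ← heq, valE_add, valE_single, gens_castAdd, hm.valE_eq b hb.1]
  exact hne (by rw [hab, heq])

lemma mem_M1set_or_exists_N1set_le (hm : IsMinMonomial c d α a B m) (hα : 0 < α)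
    (hdeg : ∀ i, ∑ j, a i j = α) (hgens : ∀ v, gens c d α a v ∈ B) (σ : Fin (c + d) →₀ ℕ) :
    σ ∈ M1set c d α B m ∨ ∃ n ∈ N1set c d α a B m, n ≤ σ := by
  induction σ using Finsupp.induction_single_one with
  | zero => exact Or.inl (hm.m_zero ▸ m_mem_M1set_of_mem_BA zero_mem_BA)
  | single_one_add v σ ih =>
    obtain ⟨b, hb, τ, hτ, rfl⟩ | ⟨n, hn, hle⟩ := ih
    · cases v using Fin.addCases with
      | left i =>
        by_cases hn : Finsupp.single (Fin.castAdd d i) 1 + m b = m (a i + b)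
        · left
          rw [← add_assoc, hn]
          have hai : a i ∈ B := by simpa using hgens (Fin.castAdd d i)
          exact add_mem_M1set (hm.m_mem_M1set hα hdeg hgens (B.add_mem hai hb.1)) hτ
        · exact Or.inr ⟨_, ⟨i, b, hb, rfl, hn⟩, by rw [← add_assoc]; exact le_self_add⟩
      | right j =>
        left
        rw [add_left_comm]
        exact add_mem_M1set (m_mem_M1set_of_mem_BA hb) (yOnly_add (yOnly_single j) hτ)
    · exact Or.inr ⟨n, hn, hle.trans le_add_self⟩

end IsMinMonomial

end SimplicialToric

open SimplicialToric

theorem compl_M1_eq_multiples_of_N1_general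
    (c d α : ℕ) (hα : 0 < α)
    (a : Fin c → Fin d → ℕ) (B : AddSubmonoid (Fin d → ℕ))
    (hBgen : B = AddSubmonoid.closure (Set.range a ∪ Set.range (eVec d α)))
    (hdeg : ∀ i, ∑ j, a i j = α)
    (m : (Fin d → ℕ) → (Fin (c + d) →₀ ℕ))
    (hmval : ∀ b ∈ B, valE c d α a (m b) = b)
    (hmmin : ∀ b ∈ B, ∀ σ, valE c d α a σ = b → m b = σ ∨ grevlex (m b) σ) :
    ∀ σ : Fin (c + d) →₀ ℕ,
      (¬ ∃ b ∈ BA B α, ∃ τ, yOnly c d τ ∧ σ = m b + τ) ↔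
        ∃ n ∈ N1set c d α a B m, ∃ ρ, σ = n + ρ := by
  intro σ
  have hm : IsMinMonomial c d α a B m := ⟨hmval, hmmin⟩
  have hgens : ∀ v, gens c d α a v ∈ B := fun v => hBgen ▸ AddSubmonoid.subset_closure (by
    cases v using Fin.addCases <;> simp)
  change σ ∉ M1set c d α B m ↔ _
  simp only [← le_iff_exists_add]
  constructor
  · exact (hm.mem_M1set_or_exists_N1set_le hα hdeg hgens σ).resolve_left
  · rintro ⟨n, hn, hle⟩ hσ
    exact hm.not_mem_M1set_of_mem_N1set hα hgens hn (hm.isLowerSet_M1set hgens hle hσ)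

/-- `M_S \ M₁ = ∪_{n ∈ N₁} M_{nS}`: a monomial is not of the form
`m_b·(y-monomial)` with `b ∈ B_A` iff it is divisible by an element of `N₁`. -/
theorem compl_M1_eq_multiples_of_N1
    (c d α : ℕ) (hα : 0 < α)
    (a : Fin c → Fin d → ℕ) (B : AddSubmonoid (Fin d → ℕ))
    (hBgen : B = AddSubmonoid.closure (Set.range a ∪ Set.range (eVec d α)))
    (hhilb : Hilb B = Set.range a ∪ Set.range (eVec d α))
    (hdeg : ∀ i, ∑ j, a i j = α)
    (m : (Fin d → ℕ) → (Fin (c + d) →₀ ℕ))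
    (hmval : ∀ b ∈ B, valE c d α a (m b) = b)
    (hmmin : ∀ b ∈ B, ∀ σ, valE c d α a σ = b → m b = σ ∨ grevlex (m b) σ) :
    ∀ σ : Fin (c + d) →₀ ℕ,
      (¬ ∃ b ∈ BA B α, ∃ τ, yOnly c d τ ∧ σ = m b + τ) ↔
        ∃ n ∈ N1set c d α a B m, ∃ ρ, σ = n + ρ :=
  compl_M1_eq_multiples_of_N1_general c d α hα a B hBgen hdeg m hmval hmmin
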